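/- arXiv:math/0307055 — 9 statements merged into one kernel-verified Lean document; each statement's English description precedes it below -/
import Mathlib

section
/- Three points c₁, c₂, c₃ in F² (F a field of characteristic zero, or more specifically a subfield of a commutative field extending ℝ) are affinely dependent if and only if their Cayley–Menger determinant Δ(c₁,c₂,c₃) = det [[0,1,1,1],[1,0,φ(c₁,c₂),φ(c₁,c₃)],[1,φ(c₂,c₁),0,φ(c₂,c₃)],[1,φ(c₃,c₁),φ(c₃,c₂),0]] equals 0. -/
/-!
Both sides reduce to the vanishing of the cross product `u × v` of `u = c₂ - c₁`, `v = c₃ - c₁`: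
two plane vectors are dependent iff the determinant of the matrix with rows `u, v` vanishes, and
expanding the Cayley–Menger determinant gives Heron's identity `Δ = -4 (u × v)²`, so in
characteristic zero `Δ = 0 ↔ u × v = 0`.
-/

theorem Prod.not_linearIndependent_pair_iff {F : Type*} [Field F] (u v : F × F) :
    ¬ LinearIndependent F ![u, v] ↔ u.1 * v.2 - u.2 * v.1 = 0 := by
  let e := (LinearEquiv.finTwoArrow F F).symm
  have hrows : LinearIndependent F ![u, v] ↔ LinearIndependent F !![u.1, u.2; v.1, v.2].row := by
    rw [← LinearMap.linearIndependent_iff (e : (F × F) →ₗ[F] (Fin 2 → F)) e.ker]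
    congr!
    ext i j
    fin_cases i <;> fin_cases j <;> rfl
  rw [hrows, Matrix.linearIndependent_rows_iff_isUnit, Matrix.isUnit_iff_isUnit_det,
    isUnit_iff_ne_zero, not_not, Matrix.det_fin_two_of]

theorem det_cayleyMenger_three {R : Type*} [CommRing R] (a b c : R) :
    Matrix.det !![0, 1, 1, 1; 1, 0, a, b; 1, a, 0, c; 1, b, c, 0]
      = a ^ 2 + b ^ 2 + c ^ 2 - 2 * (a * b + b * c + c * a) := by
  rw [Matrix.det_succ_row_zero]
  simp [Fin.sum_univ_succ, Matrix.det_fin_three, Fin.succAbove]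
  ring

section SqDist

variable {R : Type*} [CommRing R]

def sqDist (p q : R × R) : R :=
  (p.1 - q.1) ^ 2 + (p.2 - q.2) ^ 2

theorem sqDist_comm (p q : R × R) : sqDist p q = sqDist q p := by
  unfold sqDist; ring

theorem heron_sqDist (p q r : R × R) :
    sqDist p q ^ 2 + sqDist p r ^ 2 + sqDist q r ^ 2
        - 2 * (sqDist p q * sqDist p r + sqDist p r * sqDist q r + sqDist q r * sqDist p q)
      = -4 * ((q - p).1 * (r - p).2 - (q - p).2 * (r - p).1) ^ 2 := by
  simp only [sqDist, Prod.fst_sub, Prod.snd_sub]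
  ring

end SqDist

/-- Cayley–Menger criterion for three points in the plane over a field `F` of
characteristic zero: `c₁, c₂, c₃` are affinely dependent (i.e. the vectors
`c₂ - c₁` and `c₃ - c₁` are linearly dependent) iff their Cayley–Menger
determinant vanishes. Here `φ p q = (p₁-q₁)² + (p₂-q₂)²`. -/
theorem stmt_0 {F : Type*} [Field F] [CharZero F]
    (φ : F × F → F × F → F)
    (hφ : ∀ p q : F × F, φ p q = (p.1 - q.1) ^ 2 + (p.2 - q.2) ^ 2)
    (c₁ c₂ c₃ : F × F) :
    (¬ LinearIndependent F ![c₂ - c₁, c₃ - c₁]) ↔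
      Matrix.det !![0, 1, 1, 1;
                    1, 0, φ c₁ c₂, φ c₁ c₃;
                    1, φ c₂ c₁, 0, φ c₂ c₃;
                    1, φ c₃ c₁, φ c₃ c₂, 0] = 0 := by
  obtain rfl : φ = sqDist := funext₂ hφ
  rw [sqDist_comm c₂ c₁, sqDist_comm c₃ c₁, sqDist_comm c₃ c₂, det_cayleyMenger_three,
    heron_sqDist, Prod.not_linearIndependent_pair_iff]
  simp
end

section
/- If a, b ∈ F with a + b ≠ 0, and z, x, x̃ ∈ F² satisfy φ(z,x) = a², φ(x,x̃) = b², and φ(z,x̃) = (a+b)², then x - z = (a/(a+b)) · (x̃ - z). -/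
/-- Proposition 3: if `φ z x = a²`, `φ x x̃ = b²`, `φ z x̃ = (a+b)²` and
`a + b ≠ 0`, then `x - z = (a/(a+b)) • (x̃ - z)`. -/
theorem stmt_2 {F : Type*} [Field F] [CharZero F]
    (φ : F × F → F × F → F)
    (hφ : ∀ p q : F × F, φ p q = (p.1 - q.1) ^ 2 + (p.2 - q.2) ^ 2)
    (a b : F) (hab : a + b ≠ 0) (z x xt : F × F)
    (h1 : φ z x = a ^ 2) (h2 : φ x xt = b ^ 2) (h3 : φ z xt = (a + b) ^ 2) :
    x - z = (a / (a + b)) • (xt - z) := by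
  rw [hφ] at h1 h2 h3
  set u1 := x.1 - z.1 with hu1
  set u2 := x.2 - z.2 with hu2
  set v1 := xt.1 - z.1 with hv1
  set v2 := xt.2 - z.2 with hv2
  set s := a + b with hs
  set w1 := s * u1 - a * v1 with hw1
  set w2 := s * u2 - a * v2 with hw2
  have hns : s ^ 2 ≠ 0 := pow_ne_zero 2 hab
  have e1 : u1 ^ 2 + u2 ^ 2 = a ^ 2 := by linear_combination h1
  have e2 : (u1 - v1) ^ 2 + (u2 - v2) ^ 2 = b ^ 2 := by linear_combination h2
  have e3 : v1 ^ 2 + v2 ^ 2 = s ^ 2 := by linear_combination h3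
  have hww : w1 ^ 2 + w2 ^ 2 = 0 := by
    rw [hw1, hw2]
    linear_combination (s ^ 2 - a * s) * e1 + a * s * e2 + (a ^ 2 - a * s) * e3
  have hwv : w1 * v1 + w2 * v2 = 0 := by
    rw [hw1, hw2]
    linear_combination (s / 2) * e1 - (s / 2) * e2 + (s / 2 - a) * e3
  have hcross2 : (w1 * v2 - w2 * v1) ^ 2 = 0 := by
    linear_combination (v1 ^ 2 + v2 ^ 2) * hww - (w1 * v1 + w2 * v2) * hwv
  have hcross : w1 * v2 - w2 * v1 = 0 := by
    exact pow_eq_zero_iff (two_ne_zero) |>.mp hcross2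
  have hz1 : w1 = 0 := by
    have : w1 * s ^ 2 = 0 := by
      linear_combination v1 * hwv + v2 * hcross - w1 * e3
    exact (mul_eq_zero.mp this).resolve_right hns
  have hz2 : w2 = 0 := by
    have : w2 * s ^ 2 = 0 := by
      linear_combination v2 * hwv - v1 * hcross - w2 * e3
    exact (mul_eq_zero.mp this).resolve_right hns
  have g1 : s * u1 = a * v1 := by linear_combination hz1 + hw1.symm
  have g2 : s * u2 = a * v2 := by linear_combination hz2 + hw2.symm
  ext
  · show x.1 - z.1 = a / s * (xt.1 - z.1)
    rw [← hu1, ← hv1]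
    field_simp
    linear_combination g1
  · show x.2 - z.2 = a / s * (xt.2 - z.2)
    rw [← hu2, ← hv2]
    field_simp
    linear_combination g2
end

section
/- If E, F, C, D ∈ 𝔽² with φ(E,F) ≠ 0, C ≠ D, and φ(E,C) = φ(F,C) = φ(E,D) = φ(F,D), then C - E = F - D and C - F = E - D. -/
/-- Proposition 4: if `φ E F ≠ 0`, `C ≠ D` and `φ E C = φ F C = φ E D = φ F D`,
then `C - E = F - D` and `C - F = E - D`. -/
theorem stmt_3 {F : Type*} [Field F] [CharZero F]
    (φ : F × F → F × F → F)
    (hφ : ∀ p q : F × F, φ p q = (p.1 - q.1) ^ 2 + (p.2 - q.2) ^ 2)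
    (E G C D : F × F) (hEF : φ E G ≠ 0) (hCD : C ≠ D)
    (h1 : φ E C = φ G C) (h2 : φ G C = φ E D) (h3 : φ E D = φ G D) :
    C - E = G - D ∧ C - G = E - D := by
  obtain ⟨e1, e2⟩ := E
  obtain ⟨g1, g2⟩ := G
  obtain ⟨c1, c2⟩ := C
  obtain ⟨d1, d2⟩ := D
  simp only [hφ] at h1 h2 h3 hEF
  have hCD' : c1 ≠ d1 ∨ c2 ≠ d2 := by
    by_contra h
    push_neg at h
    exact hCD (by simp [Prod.ext_iff, h.1, h.2])
  -- key scalar equations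
  have huv : (e1-g1)*(c1-d1) + (e2-g2)*(c2-d2) = 0 := by linear_combination (h3 - h1)/2
  have huw : (e1-g1)*(c1+d1-e1-g1) + (e2-g2)*(c2+d2-e2-g2) = 0 := by
    linear_combination -(h1+h3)/2
  have hvw : (c1-d1)*(c1+d1-e1-g1) + (c2-d2)*(c2+d2-e2-g2) = 0 := by
    linear_combination (h1 + 2*h2 + h3)/2
  have hw : c1 + d1 - e1 - g1 = 0 ∧ c2 + d2 - e2 - g2 = 0 := by
    by_cases hk : (e1-g1)*(c2-d2) - (e2-g2)*(c1-d1) = 0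
    · exfalso
      have hvv : (c1-d1)^2 + (c2-d2)^2 = 0 := by
        have h0 : ((e1-g1)^2 + (e2-g2)^2) * ((c1-d1)^2 + (c2-d2)^2) = 0 := by
          linear_combination ((e1-g1)*(c1-d1)+(e2-g2)*(c2-d2))*huv +
            ((e1-g1)*(c2-d2)-(e2-g2)*(c1-d1))*hk
        exact (mul_eq_zero.mp h0).resolve_left hEF
      have hsq : (c1-d1)^2 = (c2-d2)^2 := by
        have h0 : ((e1-g1)^2 + (e2-g2)^2) * ((c1-d1)^2 - (c2-d2)^2) = 0 := by
          linear_combination ((e1-g1)*(c1-d1)-(e2-g2)*(c2-d2))*huv -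
            ((e2-g2)*(c1-d1)+(e1-g1)*(c2-d2))*hk
        have := (mul_eq_zero.mp h0).resolve_left hEF
        linear_combination this
      have hc1 : c1 = d1 := by
        have : (c1 - d1)^2 = 0 := by linear_combination (hvv + hsq)/2
        have := pow_eq_zero_iff (n := 2) (by norm_num) |>.mp this
        linear_combination this
      have hc2 : c2 = d2 := by
        have : (c2 - d2)^2 = 0 := by linear_combination (hvv - hsq)/2
        have := pow_eq_zero_iff (n := 2) (by norm_num) |>.mp this
        linear_combination this
      rcases hCD' with h | h <;> [exact h hc1; exact h hc2]
    · constructor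
      · have h0 : ((e1-g1)*(c2-d2) - (e2-g2)*(c1-d1)) * (c1+d1-e1-g1) = 0 := by
          linear_combination (c2-d2)*huw - (e2-g2)*hvw
        exact (mul_eq_zero.mp h0).resolve_left hk
      · have h0 : ((e1-g1)*(c2-d2) - (e2-g2)*(c1-d1)) * (c2+d2-e2-g2) = 0 := by
          linear_combination (e1-g1)*hvw - (c1-d1)*huw
        exact (mul_eq_zero.mp h0).resolve_left hk
  obtain ⟨hw1, hw2⟩ := hw
  refine ⟨Prod.ext ?_ ?_, Prod.ext ?_ ?_⟩ <;>
    simp only [Prod.fst_sub, Prod.snd_sub] <;>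
    [linear_combination hw1; linear_combination hw2; linear_combination hw1;
     linear_combination hw2]
end

section
/- If f : ℝ² → 𝔽² preserves every distance d > 0 with d² rational (i.e., |x-y| = d implies φ(f(x),f(y)) = d²), then f is injective. -/
/-- `f : ℝ² → 𝔽²` preserves every distance `d > 0` with `d²` rational
(`|x-y| = d` implies `φ (f x) (f y) = d²`). -/
theorem stmt_5 {F : Type*} [Field F] [Algebra ℝ F]
    (f : ℝ × ℝ → F × F)
    (hf : ∀ d : ℝ, 0 < d → (∃ q : ℚ, (q : ℝ) = d ^ 2) →
      ∀ x y : ℝ × ℝ, Real.sqrt ((x.1 - y.1) ^ 2 + (x.2 - y.2) ^ 2) = d →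
        ((f x).1 - (f y).1) ^ 2 + ((f x).2 - (f y).2) ^ 2 = algebraMap ℝ F (d ^ 2))
    : Function.Injective f := by
  intro x y hxy
  by_contra hne
  -- squared distance between x and y is positive
  have hS : 0 < (x.1 - y.1) ^ 2 + (x.2 - y.2) ^ 2 := by
    have h : x.1 ≠ y.1 ∨ x.2 ≠ y.2 := by
      by_contra hc
      push_neg at hc
      exact hne (Prod.ext hc.1 hc.2)
    rcases h with h | h
    · have h1 : (x.1 - y.1) ≠ 0 := sub_ne_zero.mpr h
      nlinarith [sq_nonneg (x.2 - y.2), pow_pos (abs_pos.mpr h1) 2, sq_abs (x.1 - y.1)]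
    · have h1 : (x.2 - y.2) ≠ 0 := sub_ne_zero.mpr h
      nlinarith [sq_nonneg (x.1 - y.1), pow_pos (abs_pos.mpr h1) 2, sq_abs (x.2 - y.2)]
  obtain ⟨L, hLdef⟩ : ∃ t : ℝ, t = Real.sqrt ((x.1 - y.1) ^ 2 + (x.2 - y.2) ^ 2) := ⟨_, rfl⟩
  have hL : 0 < L := hLdef ▸ Real.sqrt_pos.mpr hS
  have hL2 : L ^ 2 = (x.1 - y.1) ^ 2 + (x.2 - y.2) ^ 2 := hLdef ▸ Real.sq_sqrt hS.le
  -- pick rationals a < b with L² < a < b < 4 L²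
  obtain ⟨a, ha1, ha2⟩ := exists_rat_btwn (show L ^ 2 < 4 * L ^ 2 by nlinarith)
  obtain ⟨b, hb1, hb2⟩ := exists_rat_btwn ha2
  have hab : (a : ℝ) < (b : ℝ) := hb1
  -- set up the intersection point of the two circles
  obtain ⟨α, hαdef⟩ : ∃ t : ℝ, t = (L ^ 2 + (a : ℝ) - (b : ℝ)) / (2 * L) := ⟨_, rfl⟩
  have h2Lα : 2 * L * α = L ^ 2 + (a : ℝ) - (b : ℝ) := by
    rw [hαdef, mul_div_cancel₀ _ (by positivity : (2 : ℝ) * L ≠ 0)]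
  have haα : α ^ 2 ≤ (a : ℝ) := by
    nlinarith [sq_nonneg (L ^ 2 + (a : ℝ) - (b : ℝ)), sq_nonneg ((a : ℝ) - L ^ 2), hL.le,
      h2Lα, sq_nonneg α, sq_nonneg (α - L), sq_nonneg (α + L)]
  obtain ⟨β, hβdef⟩ : ∃ t : ℝ, t = Real.sqrt ((a : ℝ) - α ^ 2) := ⟨_, rfl⟩
  have hβ2 : β ^ 2 = (a : ℝ) - α ^ 2 := hβdef ▸ Real.sq_sqrt (by linarith)
  obtain ⟨u1, hu1⟩ : ∃ t : ℝ, t = (y.1 - x.1) / L := ⟨_, rfl⟩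
  obtain ⟨u2, hu2⟩ : ∃ t : ℝ, t = (y.2 - x.2) / L := ⟨_, rfl⟩
  have hLu1 : L * u1 = y.1 - x.1 := by
    rw [hu1, mul_div_cancel₀ _ hL.ne']
  have hLu2 : L * u2 = y.2 - x.2 := by
    rw [hu2, mul_div_cancel₀ _ hL.ne']
  have hu : u1 ^ 2 + u2 ^ 2 = 1 := by
    have key : L ^ 2 * (u1 ^ 2 + u2 ^ 2) = L ^ 2 * 1 := by
      linear_combination (L * u1 + (y.1 - x.1)) * hLu1 + (L * u2 + (y.2 - x.2)) * hLu2 - hL2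
    exact mul_left_cancel₀ (pow_ne_zero 2 hL.ne') key
  obtain ⟨z, hz⟩ : ∃ t : ℝ × ℝ, t = (x.1 + α * u1 - β * u2, x.2 + α * u2 + β * u1) := ⟨_, rfl⟩
  have hxz : (x.1 - z.1) ^ 2 + (x.2 - z.2) ^ 2 = (a : ℝ) := by
    rw [hz]
    linear_combination (α ^ 2 + β ^ 2) * hu + hβ2
  have hyz : (y.1 - z.1) ^ 2 + (y.2 - z.2) ^ 2 = (b : ℝ) := by
    rw [hz]
    have e1 : y.1 - (x.1 + α * u1 - β * u2) = (L - α) * u1 + β * u2 := by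
      linear_combination -hLu1
    have e2 : y.2 - (x.2 + α * u2 + β * u1) = (L - α) * u2 - β * u1 := by
      linear_combination -hLu2
    rw [e1, e2]
    linear_combination ((L - α) ^ 2 + β ^ 2) * hu + hβ2 - h2Lα + (u1 ^ 2 + u2 ^ 2 - 1) * h2Lα + (L ^ 2 + (a : ℝ) - (b : ℝ) - 2 * L * α) * hu
  have ha0 : (0 : ℝ) < (a : ℝ) := lt_trans (by positivity) ha1
  have hb0 : (0 : ℝ) < (b : ℝ) := lt_trans ha0 hab
  have hfx := hf (Real.sqrt a) (Real.sqrt_pos.mpr ha0) ⟨a, (Real.sq_sqrt ha0.le).symm⟩ x z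
    (by rw [hxz])
  have hfy := hf (Real.sqrt b) (Real.sqrt_pos.mpr hb0) ⟨b, (Real.sq_sqrt hb0.le).symm⟩ y z
    (by rw [hyz])
  rw [hxy] at hfx
  have hAB : algebraMap ℝ F ((Real.sqrt a) ^ 2) = algebraMap ℝ F ((Real.sqrt b) ^ 2) :=
    hfx.symm.trans hfy
  have hRe : ((Real.sqrt a) : ℝ) ^ 2 = (Real.sqrt b) ^ 2 := (algebraMap ℝ F).injective hAB
  rw [Real.sq_sqrt ha0.le, Real.sq_sqrt hb0.le] at hRe
  exact absurd hRe (ne_of_lt hab)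
end

section
/- If f : ℝ² → 𝔽² preserves every distance d > 0 with d² rational, and x, y ∈ ℝ² with x ≠ y, then φ(f(x), f(y)) ≠ 0. -/
/-- Pure algebra lemma: if `(a1,a2)` and `(b1,b2)` are "isotropically equal"
(`φ = 0`) and `(c1,c2)`, `(d1,d2)` both lie at `φ`-distance `P` from the first
and `Q` from the second with `P - Q = 1`, then `c = d`, hence any point has the
same `φ`-distance to both. -/
lemma stmt_6_alg {F : Type*} [Field F] [CharZero F]
    (a1 a2 b1 b2 c1 c2 d1 d2 w1 w2 P Q R1 R2 : F)
    (h0 : (a1 - b1)^2 + (a2 - b2)^2 = 0)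
    (H1 : (a1 - c1)^2 + (a2 - c2)^2 = P)
    (H2 : (b1 - c1)^2 + (b2 - c2)^2 = Q)
    (H3 : (a1 - d1)^2 + (a2 - d2)^2 = P)
    (H4 : (b1 - d1)^2 + (b2 - d2)^2 = Q)
    (H5 : (w1 - c1)^2 + (w2 - c2)^2 = R1)
    (H6 : (w1 - d1)^2 + (w2 - d2)^2 = R2)
    (hPQ : P - Q = 1) : R1 = R2 := by
  have h2ne : (2:F) ≠ 0 := two_ne_zero
  have hlin1 : 2*((a1-b1)*(a1-c1) + (a2-b2)*(a2-c2)) = 1 := by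
    linear_combination H1 - H2 + h0 + hPQ
  have hlin2 : 2*((a1-b1)*(a1-d1) + (a2-b2)*(a2-d2)) = 1 := by
    linear_combination H3 - H4 + h0 + hPQ
  by_cases hv : a2 - b2 = 0
  · have hu2 : (a1 - b1)^2 = 0 := by linear_combination h0 - (a2-b2)*hv
    have hu : a1 - b1 = 0 := sq_eq_zero_iff.mp hu2
    rw [hu, hv] at hlin1
    simp at hlin1
  · set I := (a1 - b1)/(a2 - b2) with hIdef
    have hu' : I * (a2 - b2) = a1 - b1 := div_mul_cancel₀ _ hv
    have hI : I^2 = -1 := by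
      rw [hIdef, div_pow, div_eq_iff (pow_ne_zero 2 hv)]
      linear_combination h0
    have hIne : I ≠ 0 := by intro h; rw [h] at hI; norm_num at hI
    have hM1 : 2*((I*(a2-b2)) * ((a1-c1) - I*(a2-c2))) = 1 := by
      linear_combination hlin1 + 2*(a1-c1)*hu' - 2*(a2-b2)*(a2-c2)*hI
    have hM2 : 2*((I*(a2-b2)) * ((a1-d1) - I*(a2-d2))) = 1 := by
      linear_combination hlin2 + 2*(a1-d1)*hu' - 2*(a2-b2)*(a2-d2)*hI
    have hIvne : I*(a2-b2) ≠ 0 := mul_ne_zero hIne hv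
    have hMeq : (a1-c1) - I*(a2-c2) = (a1-d1) - I*(a2-d2) :=
      mul_left_cancel₀ hIvne (mul_left_cancel₀ h2ne (hM1.trans hM2.symm))
    have hMne : (a1-c1) - I*(a2-c2) ≠ 0 := by
      intro h; rw [h] at hM1; simp at hM1
    have hP1 : ((a1-c1) - I*(a2-c2)) * ((a1-c1) + I*(a2-c2)) = P := by
      linear_combination H1 - (a2-c2)^2*hI
    have hP2 : ((a1-d1) - I*(a2-d2)) * ((a1-d1) + I*(a2-d2)) = P := by
      linear_combination H3 - (a2-d2)^2*hI
    have hplus : (a1-c1) + I*(a2-c2) = (a1-d1) + I*(a2-d2) := by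
      apply mul_left_cancel₀ hMne
      rw [hP1, hMeq, hP2]
    have e2' : (2*I)*(a2-c2) = (2*I)*(a2-d2) := by linear_combination hplus - hMeq
    have e2 := mul_left_cancel₀ (mul_ne_zero h2ne hIne) e2'
    have e1' : (2:F)*(a1-c1) = 2*(a1-d1) := by linear_combination hplus + hMeq
    have e1 := mul_left_cancel₀ h2ne e1'
    have hc1 : c1 = d1 := by linear_combination -e1
    have hc2 : c2 = d2 := by linear_combination -e2
    rw [← H5, ← H6, hc1, hc2]

/-- Helper: apply the distance-preservation hypothesis to a pair of points
whose squared distance is a positive rational. -/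
lemma stmt_6_key {F : Type*} [Field F] [Algebra ℝ F]
    (f : ℝ × ℝ → F × F)
    (hf : ∀ d : ℝ, 0 < d → (∃ q : ℚ, (q : ℝ) = d ^ 2) →
      ∀ x y : ℝ × ℝ, Real.sqrt ((x.1 - y.1) ^ 2 + (x.2 - y.2) ^ 2) = d →
        ((f x).1 - (f y).1) ^ 2 + ((f x).2 - (f y).2) ^ 2 = algebraMap ℝ F (d ^ 2))
    (u v : ℝ × ℝ) (p : ℝ) (hp : 0 < p) (hq : ∃ q : ℚ, (q:ℝ) = p)
    (h : (u.1 - v.1)^2 + (u.2 - v.2)^2 = p) :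
    ((f u).1 - (f v).1)^2 + ((f u).2 - (f v).2)^2 = algebraMap ℝ F p := by
  obtain ⟨q, hq⟩ := hq
  have hd2 : Real.sqrt p ^ 2 = p := Real.sq_sqrt hp.le
  have := hf (Real.sqrt p) (Real.sqrt_pos.2 hp) ⟨q, by rw [hd2]; exact hq⟩ u v (by rw [h])
  rwa [hd2] at this

/-- `f : ℝ² → 𝔽²` preserves every distance `d > 0` with `d²` rational
(`|x-y| = d` implies `φ (f x) (f y) = d²`). -/
theorem stmt_6 {F : Type*} [Field F] [Algebra ℝ F]
    (f : ℝ × ℝ → F × F)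
    (hf : ∀ d : ℝ, 0 < d → (∃ q : ℚ, (q : ℝ) = d ^ 2) →
      ∀ x y : ℝ × ℝ, Real.sqrt ((x.1 - y.1) ^ 2 + (x.2 - y.2) ^ 2) = d →
        ((f x).1 - (f y).1) ^ 2 + ((f x).2 - (f y).2) ^ 2 = algebraMap ℝ F (d ^ 2))
    (x y : ℝ × ℝ) (hxy : x ≠ y) :
    ((f x).1 - (f y).1) ^ 2 + ((f x).2 - (f y).2) ^ 2 ≠ 0 := by
  intro h0
  have hinj : Function.Injective (algebraMap ℝ F) := (algebraMap ℝ F).injective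
  haveI : CharZero F := charZero_of_injective_algebraMap hinj
  obtain ⟨dx, hdx⟩ : ∃ t : ℝ, t = y.1 - x.1 := ⟨_, rfl⟩
  obtain ⟨dy, hdy⟩ : ∃ t : ℝ, t = y.2 - x.2 := ⟨_, rfl⟩
  obtain ⟨lam, hlamdef⟩ : ∃ t : ℝ, t = dx^2 + dy^2 := ⟨_, rfl⟩
  have hlam : 0 < lam := by
    rw [hlamdef]
    rcases lt_or_ge 0 (dx^2 + dy^2) with h | h
    · exact h
    · exfalso; apply hxy
      have h1 : dx = 0 := by nlinarith [sq_nonneg dx, sq_nonneg dy]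
      have h2 : dy = 0 := by nlinarith [sq_nonneg dx, sq_nonneg dy]
      rw [hdx] at h1; rw [hdy] at h2
      exact Prod.ext_iff.mpr ⟨by linarith, by linarith⟩
  have hlamne : lam ≠ 0 := ne_of_gt hlam
  obtain ⟨a, ha⟩ : ∃ t : ℝ, t = (1/lam + 1)/2 := ⟨_, rfl⟩
  obtain ⟨p, hp⟩ := exists_rat_gt (max (lam * a^2) 1)
  have hp1 : (1:ℝ) < p := lt_of_le_of_lt (le_max_right _ _) hp
  have hpa : lam * a^2 < p := lt_of_le_of_lt (le_max_left _ _) hp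
  have hppos : (0:ℝ) < p := by linarith
  have hbarg : 0 < ((p:ℝ) - lam * a^2)/lam := div_pos (by linarith) hlam
  obtain ⟨b, hbdef⟩ : ∃ t : ℝ, t = Real.sqrt (((p:ℝ) - lam * a^2)/lam) := ⟨_, rfl⟩
  have hbpos : 0 < b := hbdef ▸ Real.sqrt_pos.2 hbarg
  have hbb : b^2 = ((p:ℝ) - lam * a^2)/lam := by rw [hbdef]; exact Real.sq_sqrt hbarg.le
  obtain ⟨bw, hbwdef⟩ : ∃ t : ℝ, t = 1/(b*lam) := ⟨_, rfl⟩
  have hbw : bw * (b*lam) = 1 := by rw [hbwdef]; exact one_div_mul_cancel (by positivity)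
  obtain ⟨R, hR⟩ := exists_rat_gt (lam * (bw - b)^2)
  have hRpos : (0:ℝ) < R := lt_of_le_of_lt (by positivity) hR
  have hawarg : 0 ≤ ((R:ℝ) - lam * (bw-b)^2)/lam := (div_pos (by linarith) hlam).le
  obtain ⟨aw, hawdef⟩ : ∃ t : ℝ, t = a + Real.sqrt (((R:ℝ) - lam * (bw-b)^2)/lam) := ⟨_, rfl⟩
  have haw : (aw - a)^2 = ((R:ℝ) - lam * (bw-b)^2)/lam := by
    rw [hawdef, add_sub_cancel_left]; exact Real.sq_sqrt hawarg
  have hbb2 : lam * b^2 = (p:ℝ) - lam * a^2 := by rw [hbb]; field_simp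
  have haw2 : lam * (aw - a)^2 = (R:ℝ) - lam * (bw-b)^2 := by rw [haw]; field_simp
  have ha2 : 2*lam*a = 1 + lam := by rw [ha]; field_simp
  obtain ⟨z₁, hz1⟩ : ∃ t : ℝ × ℝ, t = (x.1 + a*dx - b*dy, x.2 + a*dy + b*dx) := ⟨_, rfl⟩
  obtain ⟨z₂, hz2⟩ : ∃ t : ℝ × ℝ, t = (x.1 + a*dx + b*dy, x.2 + a*dy - b*dx) := ⟨_, rfl⟩
  obtain ⟨w, hw⟩ : ∃ t : ℝ × ℝ, t = (x.1 + aw*dx - bw*dy, x.2 + aw*dy + bw*dx) := ⟨_, rfl⟩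
  have hy1 : y.1 = x.1 + dx := by rw [hdx]; ring
  have hy2 : y.2 = x.2 + dy := by rw [hdy]; ring
  have H1 := stmt_6_key f hf x z₁ ((p:ℝ)) hppos ⟨p, rfl⟩ (by
    rw [hz1]; dsimp only
    linear_combination hbb2 - (a^2 + b^2) * hlamdef)
  have H2 := stmt_6_key f hf y z₁ ((p:ℝ) - 1) (by linarith) ⟨p - 1, by push_cast; ring⟩ (by
    rw [hz1]; dsimp only
    rw [hy1, hy2]
    linear_combination hbb2 - ((1-a)^2 + b^2) * hlamdef - ha2)
  have H3 := stmt_6_key f hf x z₂ ((p:ℝ)) hppos ⟨p, rfl⟩ (by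
    rw [hz2]; dsimp only
    linear_combination hbb2 - (a^2 + b^2) * hlamdef)
  have H4 := stmt_6_key f hf y z₂ ((p:ℝ) - 1) (by linarith) ⟨p - 1, by push_cast; ring⟩ (by
    rw [hz2]; dsimp only
    rw [hy1, hy2]
    linear_combination hbb2 - ((1-a)^2 + b^2) * hlamdef - ha2)
  have H5 := stmt_6_key f hf w z₁ ((R:ℝ)) hRpos ⟨R, rfl⟩ (by
    rw [hw, hz1]; dsimp only
    linear_combination haw2 - ((aw-a)^2 + (bw-b)^2) * hlamdef)
  have H6 := stmt_6_key f hf w z₂ ((R:ℝ) + 4) (by linarith) ⟨R + 4, by push_cast; ring⟩ (by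
    rw [hw, hz2]; dsimp only
    linear_combination haw2 - ((aw-a)^2 + (bw+b)^2) * hlamdef + 4*hbw)
  have hPQ : algebraMap ℝ F ((p:ℝ)) - algebraMap ℝ F ((p:ℝ) - 1) = 1 := by
    rw [← map_sub, show (p:ℝ) - ((p:ℝ) - 1) = 1 by ring, map_one]
  have hkey := stmt_6_alg ((f x).1) ((f x).2) ((f y).1) ((f y).2)
    ((f z₁).1) ((f z₁).2) ((f z₂).1) ((f z₂).2) ((f w).1) ((f w).2)
    _ _ _ _ h0 H1 H2 H3 H4 H5 H6 hPQ
  have hR4 : (R:ℝ) = (R:ℝ) + 4 := hinj hkey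
  linarith
end

section
/- Suppose f : ℝ² → 𝔽² preserves every distance d > 0 with d² rational. If t ∈ ℚ, 0 < t < 1, A, B ∈ ℝ², A ≠ B, and C = tA + (1-t)B, then f(C) = t·f(A) + (1-t)·f(B). -/
/-!
By polarisation, `f` preserves the dot products of vectors spanning triangles with rational
squared sides (on `𝔽²`, `sqNorm` is the form `φ`). If `|u|²` is a nonzero rational, the images of
`u` and of its rotation `perp u` at a base point `Z` form a frame with nonzero determinant, and
the dot products with this frame force `f (Z + q u) - f Z = q (f (Z + u) - f Z)` for all `q ∈ ℚ`.
Translating such a step by a vector `s` with rational `|s|²` does not change its image: if `b` is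
the image of `s` and `c` the change of the image of the step, then `φ (b + k c) = |s|²` for
`k = 0, 1, 2`, hence `φ c = 0`, and `c` is orthogonal to the anisotropic image of `u`, so `c = 0`.
Finally every `v` is the sum of two vectors with the same rational squared length (the legs of an
isosceles triangle over `v`), which makes `f` affine along rational ratios in every direction; and
`C = A + (1 - t) (B - A)`.
-/

namespace Plane

section CommRing
variable {R : Type*} [CommRing R]

def sqNorm (v : R × R) : R := v.1 ^ 2 + v.2 ^ 2

def dot (v w : R × R) : R := v.1 * w.1 + v.2 * w.2

def det (v w : R × R) : R := v.1 * w.2 - v.2 * w.1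

def perp (v : R × R) : R × R := (-v.2, v.1)

theorem sqNorm_smul (c : R) (v : R × R) : sqNorm (c • v) = c ^ 2 * sqNorm v := by
  simp only [sqNorm, Prod.smul_fst, Prod.smul_snd, smul_eq_mul]; ring

theorem sqNorm_smul_add_smul_perp (a b : R) (v : R × R) :
    sqNorm (a • v + b • perp v) = (a ^ 2 + b ^ 2) * sqNorm v := by
  simp only [sqNorm, perp, Prod.fst_add, Prod.snd_add, Prod.smul_fst, Prod.smul_snd, smul_eq_mul]
  ring

theorem sqNorm_perp (v : R × R) : sqNorm (perp v) = sqNorm v := by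
  simp only [sqNorm, perp]; ring

theorem sqNorm_add (v w : R × R) : sqNorm (v + w) = sqNorm v + 2 * dot v w + sqNorm w := by
  simp only [sqNorm, dot, Prod.fst_add, Prod.snd_add]; ring

theorem two_mul_dot (v w : R × R) : 2 * dot v w = sqNorm v + sqNorm w - sqNorm (v - w) := by
  simp only [sqNorm, dot, Prod.fst_sub, Prod.snd_sub]; ring

theorem dot_smul_left (c : R) (v w : R × R) : dot (c • v) w = c * dot v w := by
  simp only [dot, Prod.smul_fst, Prod.smul_snd, smul_eq_mul]; ring

theorem dot_comm (v w : R × R) : dot v w = dot w v := by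
  simp only [dot]; ring

theorem dot_zero (v : R × R) : dot v 0 = 0 := by
  simp [dot]

theorem dot_smul_right (c : R) (v w : R × R) : dot v (c • w) = c * dot v w := by
  simp only [dot, Prod.smul_fst, Prod.smul_snd, smul_eq_mul]; ring

theorem dot_self (v : R × R) : dot v v = sqNorm v := by
  simp only [dot, sqNorm]; ring

theorem dot_perp_right (v w : R × R) : dot v (perp w) = det w v := by
  simp only [dot, det, perp]; ring

theorem det_self (v : R × R) : det v v = 0 := by
  simp only [det]; ring

theorem det_perp_right (v : R × R) : det v (perp v) = sqNorm v := by
  simp only [det, sqNorm, perp]; ring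

theorem det_sq_add_dot_sq (v w : R × R) : det v w ^ 2 + dot v w ^ 2 = sqNorm v * sqNorm w := by
  simp only [det, dot, sqNorm]; ring

end CommRing

section Field
variable {F : Type*} [Field F]

theorem eq_of_dot_eq_of_det_ne_zero {a b x y : F × F} (hab : det a b ≠ 0)
    (ha : dot x a = dot y a) (hb : dot x b = dot y b) : x = y := by
  simp only [dot] at ha hb
  have h₁ : det a b * (x.1 - y.1) = 0 := by
    simp only [det]; linear_combination b.2 * ha - a.2 * hb
  have h₂ : det a b * (x.2 - y.2) = 0 := by
    simp only [det]; linear_combination a.1 * hb - b.1 * ha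
  ext
  · exact sub_eq_zero.1 ((mul_eq_zero.1 h₁).resolve_left hab)
  · exact sub_eq_zero.1 ((mul_eq_zero.1 h₂).resolve_left hab)

theorem eq_zero_of_sqNorm_eq_zero_of_dot_eq_zero {a x : F × F} (ha : sqNorm a ≠ 0)
    (hx : sqNorm x = 0) (hxa : dot x a = 0) : x = 0 := by
  have hdet : det a x = 0 := by
    have := det_sq_add_dot_sq a x
    rw [dot_comm, hxa, hx] at this
    exact pow_eq_zero_iff two_ne_zero |>.1 (by linear_combination this)
  refine eq_of_dot_eq_of_det_ne_zero (a := a) (b := perp a) (by rwa [det_perp_right]) ?_ ?_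
  · rw [hxa, dot_comm, dot_zero]
  · rw [dot_perp_right, hdet, dot_comm, dot_zero]

end Field

section Ordered
variable {R : Type*} [CommRing R] [LinearOrder R] [IsStrictOrderedRing R]

theorem sqNorm_nonneg (v : R × R) : 0 ≤ sqNorm v := by
  unfold sqNorm; positivity

theorem sqNorm_eq_zero {v : R × R} : sqNorm v = 0 ↔ v = 0 := by
  simp only [sqNorm, Prod.ext_iff, Prod.fst_zero, Prod.snd_zero]
  constructor
  · intro h
    have := (add_eq_zero_iff_of_nonneg (sq_nonneg v.1) (sq_nonneg v.2)).1 h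
    exact ⟨pow_eq_zero_iff two_ne_zero |>.1 this.1, pow_eq_zero_iff two_ne_zero |>.1 this.2⟩
  · rintro ⟨h₁, h₂⟩; simp [h₁, h₂]

end Ordered

theorem exists_rat_sqNorm_add_eq (v : ℝ × ℝ) :
    ∃ (ρ : ℚ) (u₁ u₂ : ℝ × ℝ), ρ ≠ 0 ∧ sqNorm u₁ = ρ ∧ sqNorm u₂ = ρ ∧ u₁ + u₂ = v := by
  rcases eq_or_ne v 0 with rfl | hv
  · exact ⟨1, (1, 0), (-1, 0), one_ne_zero, by simp [sqNorm], by simp [sqNorm], by simp⟩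
  have hL : 0 < sqNorm v := (sqNorm_nonneg v).lt_of_ne' (sqNorm_eq_zero.not.2 hv)
  obtain ⟨ρ, hρ⟩ := exists_rat_gt (sqNorm v / 4)
  have hρ0 : (0 : ℝ) < ρ := lt_of_le_of_lt (by positivity) hρ
  set γ := √((ρ - sqNorm v / 4) / sqNorm v)
  have hγ : ((1 / 2) ^ 2 + γ ^ 2) * sqNorm v = ρ := by
    rw [Real.sq_sqrt (div_nonneg (by linarith) hL.le)]
    field_simp
    ring
  refine ⟨ρ, (1 / 2 : ℝ) • v + γ • perp v, (1 / 2 : ℝ) • v + (-γ) • perp v,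
    by exact_mod_cast hρ0.ne', ?_, ?_, by module⟩
  · rw [sqNorm_smul_add_smul_perp, hγ]
  · rw [sqNorm_smul_add_smul_perp, neg_sq, hγ]

end Plane

open Plane

def PreservesRatSqDist {F : Type*} [Field F] (f : ℝ × ℝ → F × F) : Prop :=
  ∀ x y : ℝ × ℝ, ∀ q : ℚ, sqNorm (x - y) = q → sqNorm (f x - f y) = q

theorem preservesRatSqDist_of_sqrt {F : Type*} [Field F] [Algebra ℝ F] {f : ℝ × ℝ → F × F}
    (hf : ∀ d : ℝ, 0 < d → (∃ q : ℚ, (q : ℝ) = d ^ 2) →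
      ∀ x y : ℝ × ℝ, Real.sqrt ((x.1 - y.1) ^ 2 + (x.2 - y.2) ^ 2) = d →
        ((f x).1 - (f y).1) ^ 2 + ((f x).2 - (f y).2) ^ 2 = algebraMap ℝ F (d ^ 2)) :
    PreservesRatSqDist f := by
  intro x y q hq
  rcases (sqNorm_nonneg (x - y)).eq_or_lt with h0 | hpos
  · rw [← h0, eq_comm, Rat.cast_eq_zero] at hq
    rw [sub_eq_zero.1 (sqNorm_eq_zero.1 h0.symm), sub_self, hq, Rat.cast_zero]
    simp [sqNorm]
  · have := hf √(sqNorm (x - y)) (Real.sqrt_pos.2 hpos) ⟨q, by rw [Real.sq_sqrt hpos.le, hq]⟩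
      x y rfl
    rwa [Real.sq_sqrt hpos.le, hq, map_ratCast] at this

namespace PreservesRatSqDist
variable {F : Type*} [Field F] {f : ℝ × ℝ → F × F}

theorem sqNorm_map_add_sub (hf : PreservesRatSqDist f) (Z : ℝ × ℝ) {v : ℝ × ℝ} {a : ℚ}
    (hv : sqNorm v = a) : sqNorm (f (Z + v) - f Z) = a :=
  hf _ _ _ (by rwa [add_sub_cancel_left])

variable [CharZero F]

theorem dot_map_add_sub (hf : PreservesRatSqDist f) (Z : ℝ × ℝ) {v w : ℝ × ℝ} {a b d : ℚ}
    (hv : sqNorm v = a) (hw : sqNorm w = b) (hvw : dot v w = d) :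
    dot (f (Z + v) - f Z) (f (Z + w) - f Z) = d := by
  have hsub : sqNorm (Z + v - (Z + w)) = ((a + b - 2 * d : ℚ) : ℝ) := by
    have := two_mul_dot v w
    rw [add_sub_add_left_eq_sub]; push_cast; linear_combination this + hv + hw - 2 * hvw
  have := two_mul_dot (f (Z + v) - f Z) (f (Z + w) - f Z)
  rw [sub_sub_sub_cancel_right, hf.sqNorm_map_add_sub Z hv, hf.sqNorm_map_add_sub Z hw,
    hf _ _ _ hsub] at this
  push_cast at this
  linear_combination this / 2

theorem map_add_ratCast_smul_sub_of_sqNorm_eq (hf : PreservesRatSqDist f) {u : ℝ × ℝ} {r : ℚ}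
    (hu : sqNorm u = r) (hr : r ≠ 0) (Z : ℝ × ℝ) (q : ℚ) :
    f (Z + (q : ℝ) • u) - f Z = (q : F) • (f (Z + u) - f Z) := by
  set X := f (Z + u) - f Z
  set Y := f (Z + perp u) - f Z
  have hup : sqNorm (perp u) = r := by rw [sqNorm_perp, hu]
  have hX : sqNorm X = r := hf.sqNorm_map_add_sub Z hu
  have hXY : dot X Y = 0 := by
    simpa using hf.dot_map_add_sub Z hu hup (d := 0) (by simp [dot_perp_right, det_self])
  have hdet : det X Y ≠ 0 := by
    have := det_sq_add_dot_sq X Y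
    rw [hXY, hX, hf.sqNorm_map_add_sub Z hup, zero_pow two_ne_zero, add_zero] at this
    have hr' : (r : F) ≠ 0 := Rat.cast_ne_zero.2 hr
    exact pow_ne_zero_iff two_ne_zero |>.1 (this ▸ mul_ne_zero hr' hr')
  have hqu : sqNorm ((q : ℝ) • u) = (q ^ 2 * r : ℚ) := by
    rw [sqNorm_smul, hu]; push_cast; rfl
  have hXW : dot X (f (Z + (q : ℝ) • u) - f Z) = (q * r : ℚ) :=
    hf.dot_map_add_sub Z hu hqu (by rw [dot_smul_right, dot_self, hu]; push_cast; rfl)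
  have hYW : dot Y (f (Z + (q : ℝ) • u) - f Z) = 0 := by
    simpa using hf.dot_map_add_sub Z hup hqu (d := 0)
      (by rw [dot_smul_right, dot_comm, dot_perp_right, det_self]; simp)
  refine eq_of_dot_eq_of_det_ne_zero hdet ?_ ?_
  · rw [dot_comm, hXW, dot_smul_left, dot_self, hX]; push_cast; rfl
  · rw [dot_comm, hYW, dot_smul_left, hXY, mul_zero]

theorem map_add_add_sub_map_add (hf : PreservesRatSqDist f) {u s : ℝ × ℝ} {r ρ : ℚ}
    (hu : sqNorm u = r) (hr : r ≠ 0) (hs : sqNorm s = ρ) (Y : ℝ × ℝ) :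
    f (Y + s + u) - f (Y + s) = f (Y + u) - f Y := by
  set a := f (Y + u) - f Y
  set b := f (Y + s) - f Y
  set c := f (Y + s + u) - f (Y + s) - a
  have ha : sqNorm a = r := hf.sqNorm_map_add_sub Y hu
  have hb₀ : sqNorm b = ρ := hf.sqNorm_map_add_sub Y hs
  have hb₁ : sqNorm (b + c) = ρ := by
    have : b + c = f (Y + u + s) - f (Y + u) := by
      rw [add_right_comm Y u s]; simp only [a, b, c]; abel
    rw [this]; exact hf.sqNorm_map_add_sub _ hs
  have hb₂ : sqNorm (b + (2 : F) • c) = ρ := by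
    have e₁ := hf.map_add_ratCast_smul_sub_of_sqNorm_eq hu hr Y 2
    have e₂ := hf.map_add_ratCast_smul_sub_of_sqNorm_eq hu hr (Y + s) 2
    have : b + (2 : F) • c = f (Y + (2 : ℝ) • u + s) - f (Y + (2 : ℝ) • u) := by
      push_cast at e₁ e₂
      rw [add_right_comm Y _ s]; simp only [a, b, c]
      linear_combination (norm := module) e₁ - e₂
    rw [this]; exact hf.sqNorm_map_add_sub _ hs
  have hc : sqNorm c = 0 := by
    rw [sqNorm_add] at hb₁ hb₂; rw [dot_smul_right, sqNorm_smul] at hb₂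
    linear_combination (hb₂ - 2 * hb₁ + hb₀) / 2
  have hca : dot c a = 0 := by
    have : sqNorm (a + c) = r := by simpa [c] using hf.sqNorm_map_add_sub (Y + s) hu
    rw [sqNorm_add, hc, ha] at this
    rw [dot_comm]; linear_combination this / 2
  exact sub_eq_zero.1 <|
    eq_zero_of_sqNorm_eq_zero_of_dot_eq_zero (by rwa [ha, Rat.cast_ne_zero]) hc hca

theorem map_add_ratCast_smul_sub (hf : PreservesRatSqDist f) (A v : ℝ × ℝ) (q : ℚ) :
    f (A + (q : ℝ) • v) - f A = (q : F) • (f (A + v) - f A) := by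
  obtain ⟨ρ, u₁, u₂, hρ, hu₁, hu₂, rfl⟩ := exists_rat_sqNorm_add_eq v
  set P := A + (q : ℝ) • u₁
  have h₁ := hf.map_add_ratCast_smul_sub_of_sqNorm_eq hu₁ hρ A q
  have h₂ := hf.map_add_ratCast_smul_sub_of_sqNorm_eq hu₂ hρ P q
  have hs : sqNorm (((1 - q : ℚ) : ℝ) • u₁) = ((1 - q) ^ 2 * ρ : ℚ) := by
    rw [sqNorm_smul, hu₁]; push_cast; rfl
  have h₃ := hf.map_add_add_sub_map_add hu₂ hρ hs P
  have hP : P + ((1 - q : ℚ) : ℝ) • u₁ = A + u₁ := by simp only [P]; push_cast; module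
  rw [hP] at h₃
  rw [smul_add, ← add_assoc, ← add_assoc]
  linear_combination (norm := module) h₂ + h₁ - (q : F) • h₃

end PreservesRatSqDist

theorem stmt_7_general {F : Type*} [Field F] [Algebra ℝ F]
    (f : ℝ × ℝ → F × F)
    (hf : ∀ d : ℝ, 0 < d → (∃ q : ℚ, (q : ℝ) = d ^ 2) →
      ∀ x y : ℝ × ℝ, Real.sqrt ((x.1 - y.1) ^ 2 + (x.2 - y.2) ^ 2) = d →
        ((f x).1 - (f y).1) ^ 2 + ((f x).2 - (f y).2) ^ 2 = algebraMap ℝ F (d ^ 2))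
    (t : ℚ) (A B C : ℝ × ℝ)
    (hC : C = (t : ℝ) • A + ((1 : ℝ) - (t : ℝ)) • B) :
    f C = (t : F) • f A + ((1 : F) - (t : F)) • f B := by
  have : CharZero F := charZero_of_injective_algebraMap (algebraMap ℝ F).injective
  have h := (preservesRatSqDist_of_sqrt hf).map_add_ratCast_smul_sub A (B - A) (1 - t)
  have hC' : A + ((1 - t : ℚ) : ℝ) • (B - A) = C := by rw [hC]; push_cast; module
  rw [add_sub_cancel, hC'] at h
  push_cast at h
  linear_combination (norm := module) h

/-- `f : ℝ² → 𝔽²` preserves every distance `d > 0` with `d²` rational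
(`|x-y| = d` implies `φ (f x) (f y) = d²`). -/
theorem stmt_7 {F : Type*} [Field F] [Algebra ℝ F]
    (f : ℝ × ℝ → F × F)
    (hf : ∀ d : ℝ, 0 < d → (∃ q : ℚ, (q : ℝ) = d ^ 2) →
      ∀ x y : ℝ × ℝ, Real.sqrt ((x.1 - y.1) ^ 2 + (x.2 - y.2) ^ 2) = d →
        ((f x).1 - (f y).1) ^ 2 + ((f x).2 - (f y).2) ^ 2 = algebraMap ℝ F (d ^ 2))
    (t : ℚ) (ht0 : 0 < t) (ht1 : t < 1) (A B C : ℝ × ℝ) (hAB : A ≠ B)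
    (hC : C = (t : ℝ) • A + ((1 : ℝ) - (t : ℝ)) • B) :
    f C = (t : F) • f A + ((1 : F) - (t : F)) • f B :=
  stmt_7_general f hf t A B C hC
end

section
/- Suppose f : ℝ² → 𝔽² preserves every distance d > 0 with d² rational. If A, B, C, D ∈ ℝ² satisfy B - A = D - C and |C - A| = |D - B| is rational, then f(B) - f(A) = f(D) - f(C). -/
private lemma stmt8_nondeg {F : Type*} [Field F] (e1 e2 v1 v2 s : F) (hs : s ≠ 0)
    (he : e1 ^ 2 + e2 ^ 2 = s) (hv : v1 ^ 2 + v2 ^ 2 = 0) (ho : v1 * e1 + v2 * e2 = 0) :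
    v1 = 0 ∧ v2 = 0 := by
  have hc : (v1 * e2 - v2 * e1) ^ 2 = 0 := by
    linear_combination (e1 ^ 2 + e2 ^ 2) * hv - (v1 * e1 + v2 * e2) * ho
  have hc0 : v1 * e2 - v2 * e1 = 0 := by
    exact pow_eq_zero_iff (two_ne_zero) |>.mp hc
  constructor
  · have h1 : v1 * s = 0 := by linear_combination (-v1) * he + e1 * ho + e2 * hc0
    exact (mul_eq_zero.mp h1).resolve_right hs
  · have h2 : v2 * s = 0 := by linear_combination (-v2) * he + e2 * ho - e1 * hc0
    exact (mul_eq_zero.mp h2).resolve_right hs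

/-- `f : ℝ² → 𝔽²` preserves every distance `d > 0` with `d²` rational
(`|x-y| = d` implies `φ (f x) (f y) = d²`). -/
theorem stmt_8 {F : Type*} [Field F] [Algebra ℝ F]
    (f : ℝ × ℝ → F × F)
    (hf : ∀ d : ℝ, 0 < d → (∃ q : ℚ, (q : ℝ) = d ^ 2) →
      ∀ x y : ℝ × ℝ, Real.sqrt ((x.1 - y.1) ^ 2 + (x.2 - y.2) ^ 2) = d →
        ((f x).1 - (f y).1) ^ 2 + ((f x).2 - (f y).2) ^ 2 = algebraMap ℝ F (d ^ 2))
    (A B C D : ℝ × ℝ) (h : B - A = D - C)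
    (heq : Real.sqrt ((C.1 - A.1) ^ 2 + (C.2 - A.2) ^ 2)
         = Real.sqrt ((D.1 - B.1) ^ 2 + (D.2 - B.2) ^ 2))
    (hq : ∃ q : ℚ, Real.sqrt ((C.1 - A.1) ^ 2 + (C.2 - A.2) ^ 2) = (q : ℝ)) :
    f B - f A = f D - f C := by
  obtain ⟨q, hq⟩ := hq
  have hpos : ∀ u v : ℝ × ℝ, u ≠ v → 0 < (u.1 - v.1) ^ 2 + (u.2 - v.2) ^ 2 := by
    intro u v huv
    have hne : u.1 ≠ v.1 ∨ u.2 ≠ v.2 := by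
      by_contra hc; push_neg at hc; exact huv (Prod.ext_iff.mpr hc)
    rcases hne with h1 | h1
    · have h2 := pow_pos (abs_pos.mpr (sub_ne_zero.mpr h1)) 2
      rw [sq_abs] at h2; nlinarith [sq_nonneg (u.2 - v.2)]
    · have h2 := pow_pos (abs_pos.mpr (sub_ne_zero.mpr h1)) 2
      rw [sq_abs] at h2; nlinarith [sq_nonneg (u.1 - v.1)]
  have key : ∀ x y : ℝ × ℝ, (∃ qs : ℚ, (qs : ℝ) = (x.1 - y.1) ^ 2 + (x.2 - y.2) ^ 2) →
      ((f x).1 - (f y).1) ^ 2 + ((f x).2 - (f y).2) ^ 2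
        = algebraMap ℝ F ((x.1 - y.1) ^ 2 + (x.2 - y.2) ^ 2) := by
    rintro x y ⟨qs, hqs⟩
    by_cases hxy : x = y
    · subst hxy; simp
    · have hp := hpos x y hxy
      have hd := Real.sq_sqrt hp.le
      have := hf (Real.sqrt ((x.1 - y.1) ^ 2 + (x.2 - y.2) ^ 2)) (Real.sqrt_pos.mpr hp)
        ⟨qs, by rw [hd]; exact hqs⟩ x y rfl
      rwa [hd] at this
  have hinj : Function.Injective (algebraMap ℝ F) := (algebraMap ℝ F).injective
  haveI : CharZero F := charZero_of_injective_algebraMap hinj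
  have hσne : ∀ s : ℝ, s ≠ 0 → algebraMap ℝ F s ≠ 0 := by
    intro s hs h0
    exact hs (hinj (by rw [h0, map_zero]))
  by_cases hAB : B = A
  · rw [hAB, sub_self] at h
    have hDC : D = C := sub_eq_zero.mp h.symm
    rw [hAB, hDC, sub_self, sub_self]
  by_cases hCA : C = A
  · rw [hCA] at h
    have hBD : B = D := sub_left_inj.mp h
    rw [hCA, ← hBD]
  -- main case
  have hsCA : (C.1 - A.1) ^ 2 + (C.2 - A.2) ^ 2 = (q : ℝ) ^ 2 := by
    rw [← hq]; exact (Real.sq_sqrt (by positivity)).symm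
  have hCApos := hpos C A hCA
  set w : ℝ × ℝ := C - A with hw
  have hwC : A + w = C := by rw [hw]; ring
  have hwD : B + w = D := by rw [hw]; linear_combination h
  have hwr : w.1 ^ 2 + w.2 ^ 2 = (q : ℝ) ^ 2 := by
    simp only [hw, Prod.fst_sub, Prod.snd_sub]; exact hsCA
  have hwpos : 0 < w.1 ^ 2 + w.2 ^ 2 := by
    simp only [hw, Prod.fst_sub, Prod.snd_sub]; exact hCApos
  have hwne : w.1 ^ 2 + w.2 ^ 2 ≠ 0 := ne_of_gt hwpos
  have hrne : algebraMap ℝ F (w.1 ^ 2 + w.2 ^ 2) ≠ 0 := hσne _ hwne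
  have L : ∀ x y : ℝ × ℝ, (∃ qs : ℚ, (qs : ℝ) = (x.1 - y.1) ^ 2 + (x.2 - y.2) ^ 2) →
      ((f (x + w)).1 - (f x).1 = (f (y + w)).1 - (f y).1) ∧
      ((f (x + w)).2 - (f x).2 = (f (y + w)).2 - (f y).2) := by
    intro x y hxyQ
    by_cases hxy : x = y
    · subst hxy; exact ⟨rfl, rfl⟩
    obtain ⟨qs, hqs⟩ := hxyQ
    have hspos := hpos x y hxy
    have hsne : algebraMap ℝ F ((x.1 - y.1) ^ 2 + (x.2 - y.2) ^ 2) ≠ 0 :=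
      hσne _ (ne_of_gt hspos)
    set M : ℝ × ℝ := ((x.1 + y.1) / 2, (x.2 + y.2) / 2) with hM
    have k1 := key x y ⟨qs, hqs⟩
    have eM1 : (x.1 - M.1) ^ 2 + (x.2 - M.2) ^ 2
        = ((x.1 - y.1) ^ 2 + (x.2 - y.2) ^ 2) / 4 := by simp only [hM]; ring
    have k2 := key x M ⟨qs / 4, by push_cast; rw [eM1, ← hqs]⟩
    rw [eM1, map_div₀, map_ofNat] at k2
    have eM2 : (y.1 - M.1) ^ 2 + (y.2 - M.2) ^ 2
        = ((x.1 - y.1) ^ 2 + (x.2 - y.2) ^ 2) / 4 := by simp only [hM]; ring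
    have k3 := key y M ⟨qs / 4, by push_cast; rw [eM2, ← hqs]⟩
    rw [eM2, map_div₀, map_ofNat] at k3
    have e4 : ((x + w).1 - (y + w).1) ^ 2 + ((x + w).2 - (y + w).2) ^ 2
        = (x.1 - y.1) ^ 2 + (x.2 - y.2) ^ 2 := by
      simp only [Prod.fst_add, Prod.snd_add]; ring
    have k4 := key (x + w) (y + w) ⟨qs, by rw [e4]; exact hqs⟩
    rw [e4] at k4
    have e5 : ((x + w).1 - (M + w).1) ^ 2 + ((x + w).2 - (M + w).2) ^ 2
        = ((x.1 - y.1) ^ 2 + (x.2 - y.2) ^ 2) / 4 := by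
      simp only [hM, Prod.fst_add, Prod.snd_add]; ring
    have k5 := key (x + w) (M + w) ⟨qs / 4, by push_cast; rw [e5, ← hqs]⟩
    rw [e5, map_div₀, map_ofNat] at k5
    have e6 : ((y + w).1 - (M + w).1) ^ 2 + ((y + w).2 - (M + w).2) ^ 2
        = ((x.1 - y.1) ^ 2 + (x.2 - y.2) ^ 2) / 4 := by
      simp only [hM, Prod.fst_add, Prod.snd_add]; ring
    have k6 := key (y + w) (M + w) ⟨qs / 4, by push_cast; rw [e6, ← hqs]⟩
    rw [e6, map_div₀, map_ofNat] at k6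
    have e7 : (x.1 - (x + w).1) ^ 2 + (x.2 - (x + w).2) ^ 2 = w.1 ^ 2 + w.2 ^ 2 := by
      simp only [Prod.fst_add, Prod.snd_add]; ring
    have k7 := key x (x + w) ⟨q ^ 2, by push_cast; rw [e7, ← hwr]⟩
    rw [e7] at k7
    have e8 : (y.1 - (y + w).1) ^ 2 + (y.2 - (y + w).2) ^ 2 = w.1 ^ 2 + w.2 ^ 2 := by
      simp only [Prod.fst_add, Prod.snd_add]; ring
    have k8 := key y (y + w) ⟨q ^ 2, by push_cast; rw [e8, ← hwr]⟩
    rw [e8] at k8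
    have e9 : (M.1 - (M + w).1) ^ 2 + (M.2 - (M + w).2) ^ 2 = w.1 ^ 2 + w.2 ^ 2 := by
      simp only [Prod.fst_add, Prod.snd_add]; ring
    have k9 := key M (M + w) ⟨q ^ 2, by push_cast; rw [e9, ← hwr]⟩
    rw [e9] at k9
    -- midpoint relation for x, y
    obtain ⟨hu1, hu2⟩ := stmt8_nondeg ((f x).1 - (f y).1) ((f x).2 - (f y).2)
      ((f x).1 + (f y).1 - 2 * (f M).1) ((f x).2 + (f y).2 - 2 * (f M).2) _ hsne k1
      (by linear_combination 2 * k2 + 2 * k3 - k1) (by linear_combination k2 - k3)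
    -- midpoint relation for x+w, y+w
    obtain ⟨hu1', hu2'⟩ := stmt8_nondeg ((f (x + w)).1 - (f (y + w)).1)
      ((f (x + w)).2 - (f (y + w)).2)
      ((f (x + w)).1 + (f (y + w)).1 - 2 * (f (M + w)).1)
      ((f (x + w)).2 + (f (y + w)).2 - 2 * (f (M + w)).2) _ hsne k4
      (by linear_combination 2 * k5 + 2 * k6 - k4) (by linear_combination k5 - k6)
    have hm1 : (f M).1 = ((f x).1 + (f y).1) / 2 := by linear_combination (-1/2 : F) * hu1
    have hm2 : (f M).2 = ((f x).2 + (f y).2) / 2 := by linear_combination (-1/2 : F) * hu2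
    have hm1' : (f (M + w)).1 = ((f (x + w)).1 + (f (y + w)).1) / 2 := by
      linear_combination (-1/2 : F) * hu1'
    have hm2' : (f (M + w)).2 = ((f (x + w)).2 + (f (y + w)).2) / 2 := by
      linear_combination (-1/2 : F) * hu2'
    rw [hm1, hm2, hm1', hm2'] at k9
    obtain ⟨hv1, hv2⟩ := stmt8_nondeg ((f x).1 - (f (x + w)).1) ((f x).2 - (f (x + w)).2)
      (((f (x + w)).1 - (f x).1) - ((f (y + w)).1 - (f y).1))
      (((f (x + w)).2 - (f x).2) - ((f (y + w)).2 - (f y).2)) _ hrne k7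
      (by linear_combination 2 * k7 + 2 * k8 - 4 * k9)
      (by linear_combination (-3/2 : F) * k7 + (-1/2 : F) * k8 + 2 * k9)
    exact ⟨by linear_combination hv1, by linear_combination hv2⟩
  -- construct the auxiliary point P
  have hd2pos := hpos B A hAB
  set n : ℚ := (⌈(B.1 - A.1) ^ 2 + (B.2 - A.2) ^ 2⌉₊ : ℚ) + 1 with hn
  have hnge : (B.1 - A.1) ^ 2 + (B.2 - A.2) ^ 2 ≤ (n : ℝ) := by
    rw [hn]; push_cast
    have := Nat.le_ceil ((B.1 - A.1) ^ 2 + (B.2 - A.2) ^ 2)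
    linarith
  have hn1 : (1 : ℝ) ≤ (n : ℝ) := by
    rw [hn]; push_cast
    have : (0 : ℝ) ≤ (⌈(B.1 - A.1) ^ 2 + (B.2 - A.2) ^ 2⌉₊ : ℝ) := Nat.cast_nonneg _
    linarith
  have hnum : 0 ≤ (n : ℝ) ^ 2 - ((B.1 - A.1) ^ 2 + (B.2 - A.2) ^ 2) / 4 := by nlinarith
  set t : ℝ := Real.sqrt (((n : ℝ) ^ 2 - ((B.1 - A.1) ^ 2 + (B.2 - A.2) ^ 2) / 4)
      / ((B.1 - A.1) ^ 2 + (B.2 - A.2) ^ 2)) with htdef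
  have ht2 : t ^ 2 * ((B.1 - A.1) ^ 2 + (B.2 - A.2) ^ 2)
      = (n : ℝ) ^ 2 - ((B.1 - A.1) ^ 2 + (B.2 - A.2) ^ 2) / 4 := by
    rw [htdef, Real.sq_sqrt (div_nonneg hnum hd2pos.le),
      div_mul_cancel₀ _ (ne_of_gt hd2pos)]
  set P : ℝ × ℝ := ((A.1 + B.1) / 2 - t * (B.2 - A.2), (A.2 + B.2) / 2 + t * (B.1 - A.1))
    with hP
  have hPA : (P.1 - A.1) ^ 2 + (P.2 - A.2) ^ 2 = (n : ℝ) ^ 2 := by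
    simp only [hP]; linear_combination ht2
  have hPB : (P.1 - B.1) ^ 2 + (P.2 - B.2) ^ 2 = (n : ℝ) ^ 2 := by
    simp only [hP]; linear_combination ht2
  obtain ⟨L1A, L2A⟩ := L A P ⟨n ^ 2, by push_cast; linear_combination -hPA⟩
  obtain ⟨L1B, L2B⟩ := L B P ⟨n ^ 2, by push_cast; linear_combination -hPB⟩
  rw [hwC] at L1A L2A
  rw [hwD] at L1B L2B
  refine Prod.ext_iff.mpr ⟨?_, ?_⟩
  · simp only [Prod.fst_sub]; linear_combination L1A - L1B
  · simp only [Prod.snd_sub]; linear_combination L2A - L2B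
end

section
/- Let g : ℝ² → 𝔽² be an additive map that preserves collinearity through the origin (for each λ ∈ ℝ and nonzero u ∈ ℝ² there is θ(λ,u) ∈ 𝔽 with g(λu) = θ(λ,u)·g(u)), such that g(u) ≠ 0 for u ≠ 0 and g sends ℝ-linearly independent pairs to 𝔽-linearly independent pairs. Then θ(λ,u) is independent of u, and the resulting function ρ : ℝ → 𝔽, ρ(λ) = θ(λ,u), is a field homomorphism (additive and multiplicative with ρ(1)=1), and g(λu) = ρ(λ)·g(u) for all λ ∈ ℝ, u ∈ ℝ². -/
/-- If `g : ℝ² → 𝔽²` is additive, kills no nonzero vector, preserves linear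
independence, and satisfies `g (λ • u) = θ λ u • g u`, then `θ λ u` is
independent of `u` and `ρ λ = θ λ u` defines a field homomorphism `ℝ →+* 𝔽`
with `g (λ • u) = ρ λ • g u` for all `λ, u`. -/
theorem stmt_15 {F : Type*} [Field F] [Algebra ℝ F]
    (g : ℝ × ℝ → F × F)
    (hadd : ∀ u v : ℝ × ℝ, g (u + v) = g u + g v)
    (hnz : ∀ u : ℝ × ℝ, u ≠ 0 → g u ≠ 0)
    (hli : ∀ u v : ℝ × ℝ, LinearIndependent ℝ ![u, v] →
      LinearIndependent F ![g u, g v])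
    (θ : ℝ → (ℝ × ℝ) → F)
    (hθ : ∀ (l : ℝ) (u : ℝ × ℝ), u ≠ 0 → g (l • u) = θ l u • g u) :
    (∀ (l : ℝ) (u v : ℝ × ℝ), u ≠ 0 → v ≠ 0 → θ l u = θ l v) ∧
    ∃ ρ : ℝ →+* F, (∀ (l : ℝ) (u : ℝ × ℝ), u ≠ 0 → ρ l = θ l u) ∧
      ∀ (l : ℝ) (u : ℝ × ℝ), g (l • u) = ρ l • g u := by
  -- g 0 = 0
  have g0 : g 0 = 0 := by
    have h := hadd 0 0
    simp only [add_zero, left_eq_add] at h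
    exact h
  -- cancellation of scalars on nonzero vectors
  have cancel : ∀ (c d : F) (x : F × F), x ≠ 0 → c • x = d • x → c = d := by
    intro c d x hx h
    have h' : (c - d) • x = 0 := by rw [sub_smul, h, sub_self]
    rcases smul_eq_zero.mp h' with hc | hc
    · exact sub_eq_zero.mp hc
    · exact absurd hc hx
  -- determinant criterion for linear independence in ℝ²
  have detlem : ∀ u v : ℝ × ℝ, u.1 * v.2 - u.2 * v.1 ≠ 0 → LinearIndependent ℝ ![u, v] := by
    intro u v hdet
    rw [LinearIndependent.pair_iff]
    intro s t hst
    have h1 : s * u.1 + t * v.1 = 0 := congrArg Prod.fst hst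
    have h2 : s * u.2 + t * v.2 = 0 := congrArg Prod.snd hst
    constructor
    · have hs : s * (u.1 * v.2 - u.2 * v.1) = 0 := by linear_combination v.2 * h1 - v.1 * h2
      exact (mul_eq_zero.mp hs).resolve_right hdet
    · have ht : t * (u.1 * v.2 - u.2 * v.1) = 0 := by linear_combination (-u.2) * h1 + u.1 * h2
      exact (mul_eq_zero.mp ht).resolve_right hdet
  -- key lemma for independent pairs
  have keyA : ∀ (l : ℝ) (u v : ℝ × ℝ), u ≠ 0 → v ≠ 0 →
      LinearIndependent ℝ ![u, v] → θ l u = θ l v := by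
    intro l u v hu hv hind
    have hgli := hli u v hind
    have hsum : u + v ≠ 0 := by
      intro h
      have := (LinearIndependent.pair_iff.mp hind 1 1 (by rw [one_smul, one_smul]; exact h)).1
      norm_num at this
    have e1 : g (l • (u + v)) = θ l (u + v) • g u + θ l (u + v) • g v := by
      rw [hθ l (u + v) hsum, hadd, smul_add]
    have e2 : g (l • (u + v)) = θ l u • g u + θ l v • g v := by
      rw [smul_add, hadd, hθ l u hu, hθ l v hv]
    have e3 : θ l (u + v) • g u + θ l (u + v) • g v = θ l u • g u + θ l v • g v := by
      rw [← e1, e2]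
    have e4 : (θ l (u + v) - θ l u) • g u + (θ l (u + v) - θ l v) • g v = 0 := by
      rw [sub_smul, sub_smul,
        show θ l (u + v) • g u - θ l u • g u + (θ l (u + v) • g v - θ l v • g v) =
          (θ l (u + v) • g u + θ l (u + v) • g v) - (θ l u • g u + θ l v • g v) by abel,
        e3, sub_self]
    obtain ⟨h1, h2⟩ := LinearIndependent.pair_iff.mp hgli _ _ e4
    have hu' : θ l (u + v) = θ l u := sub_eq_zero.mp h1
    have hv' : θ l (u + v) = θ l v := sub_eq_zero.mp h2
    rw [← hu', hv']
  -- full first conjunct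
  have conj1 : ∀ (l : ℝ) (u v : ℝ × ℝ), u ≠ 0 → v ≠ 0 → θ l u = θ l v := by
    intro l u v hu hv
    have hu12 : u.1 ≠ 0 ∨ u.2 ≠ 0 := by
      by_contra h
      push_neg at h
      exact hu (Prod.ext h.1 h.2)
    have hupos : u.1 ^ 2 + u.2 ^ 2 > 0 := by
      rcases hu12 with h | h <;> positivity
    by_cases hd : u.1 * v.2 - u.2 * v.1 ≠ 0
    · exact keyA l u v hu hv (detlem u v hd)
    · push_neg at hd
      set w : ℝ × ℝ := (-u.2, u.1) with hwdef
      have hw : w ≠ 0 := by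
        intro hw0
        have h1 : w.1 = 0 := by rw [hw0]; rfl
        have h2 : w.2 = 0 := by rw [hw0]; rfl
        simp only [hwdef, neg_eq_zero] at h1 h2
        exact hu (Prod.ext h2 h1)
      have hduw : u.1 * w.2 - u.2 * w.1 ≠ 0 := by
        simp only [hwdef]
        have : u.1 * u.1 - u.2 * (-u.2) = u.1 ^ 2 + u.2 ^ 2 := by ring
        rw [this]
        exact hupos.ne'
      have hdwv : w.1 * v.2 - w.2 * v.1 ≠ 0 := by
        intro h2
        apply hv
        simp only [hwdef] at h2
        have hv1 : v.1 = 0 := by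
          have e : (u.1 ^ 2 + u.2 ^ 2) * v.1 = 0 := by linear_combination (-u.2) * hd - u.1 * h2
          exact (mul_eq_zero.mp e).resolve_left hupos.ne'
        have hv2 : v.2 = 0 := by
          have e : (u.1 ^ 2 + u.2 ^ 2) * v.2 = 0 := by linear_combination u.1 * hd - u.2 * h2
          exact (mul_eq_zero.mp e).resolve_left hupos.ne'
        exact Prod.ext hv1 hv2
      have h1 := keyA l u w hu hw (detlem u w hduw)
      have h2 := keyA l w v hw hv (detlem w v hdwv)
      rw [h1, h2]
  -- build the ring hom
  have he1 : ((1 : ℝ), (0 : ℝ)) ≠ (0 : ℝ × ℝ) := by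
    intro h
    have := congrArg Prod.fst h
    norm_num at this
  have hge1 : g (1, 0) ≠ 0 := hnz _ he1
  have hzero : θ 0 ((1 : ℝ), (0 : ℝ)) = 0 := by
    apply cancel _ _ _ hge1
    rw [← hθ 0 _ he1, zero_smul, g0, zero_smul]
  have hone : θ 1 ((1 : ℝ), (0 : ℝ)) = 1 := by
    apply cancel _ _ _ hge1
    rw [← hθ 1 _ he1, one_smul, one_smul]
  have haddρ : ∀ a b : ℝ, θ (a + b) ((1 : ℝ), (0 : ℝ)) =
      θ a ((1 : ℝ), (0 : ℝ)) + θ b ((1 : ℝ), (0 : ℝ)) := by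
    intro a b
    apply cancel _ _ _ hge1
    rw [← hθ (a + b) _ he1, add_smul, hadd, hθ a _ he1, hθ b _ he1, add_smul]
  have hmulρ : ∀ a b : ℝ, θ (a * b) ((1 : ℝ), (0 : ℝ)) =
      θ a ((1 : ℝ), (0 : ℝ)) * θ b ((1 : ℝ), (0 : ℝ)) := by
    intro a b
    by_cases hb : b = 0
    · rw [hb, mul_zero, hzero, mul_zero]
    · have hbe1 : b • ((1 : ℝ), (0 : ℝ)) ≠ (0 : ℝ × ℝ) :=
        smul_ne_zero hb he1
      apply cancel _ _ _ hge1
      rw [← hθ (a * b) _ he1, mul_smul, hθ a _ hbe1, hθ b _ he1,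
        conj1 a _ _ hbe1 he1, mul_smul]
  refine ⟨conj1, ⟨⟨⟨⟨fun l => θ l ((1 : ℝ), (0 : ℝ)), hone⟩, hmulρ⟩, hzero, haddρ⟩, ?_, ?_⟩⟩
  · intro l u hu
    exact conj1 l _ u he1 hu
  · intro l u
    by_cases hu : u = 0
    · rw [hu, smul_zero, g0, smul_zero]
    · rw [hθ l u hu]
      congr 1
      exact (conj1 l _ u he1 hu).symm
end

section
/- Let z, x, x̃ ∈ 𝔽², a, b ∈ 𝔽 with a + b ≠ 0, φ(z,x) = a², φ(x,x̃) = b², φ(z,x̃) = (a+b)². If additionally x - z = c·(x̃ - z) with c = -a/(a+b), then a = 0. (Key case analysis in the proof of Proposition 3: the 'wrong sign' forces a = 0.) -/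
/-! Since `x - z = c • (x̃ - z)`, also `x - x̃ = (1 - c) • (z - x̃)`, so the second and third
distance conditions give `b² = (1 - c)² (a + b)² = (2a + b)²` for `c = -a/(a+b)`.
Hence `4a(a + b) = 0`, and `a + b ≠ 0` forces `a = 0`. -/

theorem sub_eq_one_sub_smul_sub_of_sub_eq_smul_sub {R M : Type*} [Ring R] [AddCommGroup M]
    [Module R M] {x y z : M} {c : R} (h : x - z = c • (y - z)) :
    x - y = (1 - c) • (z - y) := by
  rw [sub_smul, one_smul, ← neg_sub y z, smul_neg, ← h]
  abel

theorem Prod.fst_sq_add_snd_sq_smul {R : Type*} [CommRing R] (c : R) (v : R × R) :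
    (c • v).1 ^ 2 + (c • v).2 ^ 2 = c ^ 2 * (v.1 ^ 2 + v.2 ^ 2) := by
  simp only [Prod.smul_fst, Prod.smul_snd, smul_eq_mul]
  ring

theorem eq_zero_of_sq_eq_sq_two_mul_add {R : Type*} [CommRing R] [IsDomain R] [NeZero (2 : R)]
    {a b : R} (hab : a + b ≠ 0) (h : b ^ 2 = (2 * a + b) ^ 2) : a = 0 := by
  have h4 : (2 * 2 : R) * (a * (a + b)) = 0 := by linear_combination -h
  simpa [two_ne_zero, hab] using h4

theorem stmt_18_general {F : Type*} [Field F] [CharZero F]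
    (φ : F × F → F × F → F)
    (hφ : ∀ p q : F × F, φ p q = (p.1 - q.1) ^ 2 + (p.2 - q.2) ^ 2)
    (a b : F) (hab : a + b ≠ 0) (z x xt : F × F)
    (h2 : φ x xt = b ^ 2) (h3 : φ z xt = (a + b) ^ 2)
    (hc : x - z = (-a / (a + b)) • (xt - z)) :
    a = 0 := by
  set c := -a / (a + b)
  have hcab : (1 - c) * (a + b) = 2 * a + b := by
    simp only [c]
    field_simp
    ring
  have hx := sub_eq_one_sub_smul_sub_of_sub_eq_smul_sub hc
  apply eq_zero_of_sq_eq_sq_two_mul_add hab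
  calc b ^ 2 = (x - xt).1 ^ 2 + (x - xt).2 ^ 2 := by rw [← h2, hφ]; rfl
    _ = (1 - c) ^ 2 * ((z - xt).1 ^ 2 + (z - xt).2 ^ 2) := by
      rw [hx, Prod.fst_sq_add_snd_sq_smul]
    _ = (1 - c) ^ 2 * (a + b) ^ 2 := by rw [← h3, hφ]; rfl
    _ = (2 * a + b) ^ 2 := by rw [← hcab]; ring

/-- Key case analysis in the proof of Proposition 3: under the hypotheses of
Proposition 3, the "wrong sign" `x - z = (-a/(a+b)) • (x̃ - z)` forces `a = 0`. -/
theorem stmt_18 {F : Type*} [Field F] [CharZero F]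
    (φ : F × F → F × F → F)
    (hφ : ∀ p q : F × F, φ p q = (p.1 - q.1) ^ 2 + (p.2 - q.2) ^ 2)
    (a b : F) (hab : a + b ≠ 0) (z x xt : F × F)
    (h1 : φ z x = a ^ 2) (h2 : φ x xt = b ^ 2) (h3 : φ z xt = (a + b) ^ 2)
    (hc : x - z = (-a / (a + b)) • (xt - z)) :
    a = 0 :=
  stmt_18_general φ hφ a b hab z x xt h2 h3 hc
end
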